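/- arXiv:1706.05506 — 4 statements merged into one kernel-verified Lean document; each statement's English description precedes it below -/
import Mathlib

section
/- Let N ≥ 2, k ≥ 1, and let D ⊂ ℝ^N be a bounded open set containing k pairwise disjoint balls of radius r_D > 0. For δ > 0 set α := (N−1)/N + δ and let (Ω_1^δ,…,Ω_k^δ) ∈ 𝒫_k(D) minimize Σ_{i=1}^k P(Ω_i)/(ω_N|Ω_i|^α) over 𝒫_k(D). Then for every i = 1,…,k one has limsup_{δ→0^+} P(Ω_i^δ)/(ω_N|Ω_i^δ|^{(N−1)/N}) ≤ 1; in particular limsup_{δ→0^+} P(Ω_i^δ) ≤ ω_N|D|^{(N−1)/N}. -/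
open MeasureTheory Metric Set Filter Function
open scoped ENNReal NNReal Topology symmDiff

noncomputable section

/-- Euclidean space ℝ^N. -/
abbrev Euc (N : ℕ) : Type := EuclideanSpace ℝ (Fin N)

/-- The essential (measure-theoretic) boundary of a measurable set: the set of
points at which the Lebesgue density of the set is neither 0 nor 1 (including
points where the density does not exist). -/
def essBoundary (N : ℕ) (Ω : Set (Euc N)) : Set (Euc N) :=
  {x | ¬ Tendsto (fun ρ : ℝ => volume (Ω ∩ ball x ρ) / volume (ball x ρ)) (𝓝[>] 0) (𝓝 0) ∧
       ¬ Tendsto (fun ρ : ℝ => volume (Ω ∩ ball x ρ) / volume (ball x ρ)) (𝓝[>] 0) (𝓝 1)}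

/-- The perimeter of a set: the (N-1)-dimensional Hausdorff measure of its
essential boundary (which agrees with the reduced boundary up to ℋ^{N-1}-null
sets, by Federer's theorem). -/
def perim (N : ℕ) (Ω : Set (Euc N)) : ℝ≥0∞ :=
  μH[(N : ℝ) - 1] (essBoundary N Ω)

/-- The α-Cheeger ratio P(Ω)/|Ω|^α, with the convention that it equals +∞ when
Ω is Lebesgue-null (the case of infinite perimeter being handled automatically
by the ℝ≥0∞-valued arithmetic). -/
def cheegerRatio (N : ℕ) (α : ℝ) (Ω : Set (Euc N)) : ℝ≥0∞ :=
  if volume Ω = 0 then ∞ else perim N Ω / (volume Ω) ^ α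

/-- The isoperimetric constant ω_N = P(B)/|B|^{(N-1)/N} for a ball B ⊂ ℝ^N. -/
def omegaN (N : ℕ) : ℝ≥0∞ :=
  perim N (ball (0 : Euc N) 1) / (volume (ball (0 : Euc N) 1)) ^ (((N : ℝ) - 1) / N)

/-- The ω_N-normalized α-Cheeger ratio P(Ω)/(ω_N |Ω|^α), equal to +∞ when |Ω| = 0. -/
def cheegerRatioW (N : ℕ) (α : ℝ) (Ω : Set (Euc N)) : ℝ≥0∞ :=
  if volume Ω = 0 then ∞ else perim N Ω / (omegaN N * (volume Ω) ^ α)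

/-- 𝒫_k(D): k-tuples of pairwise disjoint measurable subsets of D. -/
def IsCluster {N : ℕ} (D : Set (Euc N)) {k : ℕ} (Ω : Fin k → Set (Euc N)) : Prop :=
  (∀ i, Ω i ⊆ D) ∧ (∀ i, MeasurableSet (Ω i)) ∧ Pairwise (Disjoint on Ω)

/-!
Write `W` for the normalized ratio `cheegerRatioW`. Balls `B_r` are admissible cells with
`W(B_r) ≤ |B_r|^{-δ}`, so the cell `Ω_j` of a minimizer with the smallest value `m = W(Ω_j)` has
`m ≤ |B_r|^{-δ}`. Shrinking `D` by `λ = r/R` (where `D ⊆ B_R`) and placing a copy of `Ω_j` in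
each ball gives a competitor of cost at most `k λ^{-Nδ} m`; comparing with `W(Ω_i) + (k - 1) m`
yields
`W(Ω_i) ≤ (k λ^{-Nδ} - (k - 1)) |B_r|^{-δ}`. Multiplying by `|Ω_i|^δ ≤ |D|^δ` bounds
`P(Ω_i)/(ω_N |Ω_i|^{(N-1)/N})` by a quantity tending to `1` as `δ → 0⁺`.
-/

open scoped Pointwise

namespace ENNReal

lemma continuous_const_rpow {c : ℝ≥0∞} (h0 : c ≠ 0) (htop : c ≠ ∞) :
    Continuous fun e : ℝ => c ^ e := by
  have hc : 0 < c.toReal := ENNReal.toReal_pos h0 htop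
  rw [← ENNReal.ofReal_toReal htop]
  simp_rw [ENNReal.ofReal_rpow_of_pos hc]
  exact ENNReal.continuous_ofReal.comp (Real.continuous_const_rpow hc.ne')

lemma tendsto_const_rpow_nhds_zero {c : ℝ≥0∞} (h0 : c ≠ 0) (htop : c ≠ ∞) {f : ℝ → ℝ}
    (hf : Tendsto f (𝓝 0) (𝓝 0)) : Tendsto (fun e => c ^ f e) (𝓝 0) (𝓝 1) := by
  have h := (continuous_const_rpow h0 htop).tendsto 0
  rw [ENNReal.rpow_zero] at h
  exact h.comp hf

lemma div_mul_self_le_inv (a : ℝ≥0∞) {b : ℝ≥0∞} (h0 : b ≠ 0) (htop : b ≠ ∞) :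
    a / (a * b) ≤ b⁻¹ := by
  rw [div_eq_mul_inv, ENNReal.mul_inv (Or.inr htop) (Or.inr h0), ← mul_assoc]
  exact mul_le_of_le_one_left' (ENNReal.mul_inv_le_one a)

lemma le_div_mul_self {a b : ℝ≥0∞} (htop : b ≠ ∞) (h : a / b ≠ ∞) : a ≤ a / b * b := by
  rcases eq_or_ne b 0 with rfl | h0
  · by_contra ha
    exact h (ENNReal.div_zero fun ha0 => ha (by simp [ha0]))
  · exact (ENNReal.div_mul_cancel h0 htop).ge

end ENNReal

lemma apply_le_of_sum_le_card_mul {ι : Type*} [Fintype ι] (f : ι → ℝ≥0∞) {b c : ℝ≥0∞} (hb : b ≠ ∞)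
    (hb_sum : ∑ j, f j ≤ Fintype.card ι * b)
    (hc_sum : ∀ j, ∑ l, f l ≤ Fintype.card ι * (c * f j)) (i : ι) :
    f i ≤ (Fintype.card ι * c - (Fintype.card ι - 1)) * b := by
  classical
  have hn : 1 ≤ Fintype.card ι := Fintype.card_pos_iff.2 ⟨i⟩
  generalize hcard : Fintype.card ι = n at hn hb_sum hc_sum ⊢
  obtain ⟨j, -, hj⟩ := Finset.univ.exists_min_image f ⟨i, Finset.mem_univ i⟩
  have hfj : f j ≤ b := by
    have h := Finset.card_nsmul_le_sum Finset.univ f (f j) fun l _ => hj l (Finset.mem_univ l)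
    rw [nsmul_eq_mul, Finset.card_univ, hcard] at h
    exact (ENNReal.mul_le_mul_iff_right (by simp; omega) (by simp)).1 (h.trans hb_sum)
  have hfj_top : f j ≠ ∞ := ne_top_of_le_ne_top hb hfj
  have hsplit : f i + (n - 1) * f j ≤ n * c * f j := by
    have h := Finset.card_nsmul_le_sum (Finset.univ.erase i) f (f j)
      fun l _ => hj l (Finset.mem_univ l)
    rw [nsmul_eq_mul, Finset.card_erase_of_mem (Finset.mem_univ i), Finset.card_univ, hcard,
      ENNReal.natCast_sub, Nat.cast_one] at h
    calc f i + (n - 1) * f j ≤ f i + ∑ l ∈ Finset.univ.erase i, f l := by gcongr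
      _ = ∑ l, f l := Finset.add_sum_erase _ _ (Finset.mem_univ i)
      _ ≤ n * c * f j := (hc_sum j).trans_eq (mul_assoc _ _ _).symm
  calc f i ≤ n * c * f j - (n - 1) * f j :=
        ENNReal.le_sub_of_add_le_right (ENNReal.mul_ne_top (by simp) hfj_top) hsplit
    _ = (n * c - (n - 1)) * f j := (ENNReal.sub_mul fun _ _ => hfj_top).symm
    _ ≤ (n * c - (n - 1)) * b := by gcongr

lemma tendsto_natCast_mul_rpow_sub_mul_rpow {k : ℕ} (hk : k ≠ 0) {a b d : ℝ≥0∞}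
    (ha0 : a ≠ 0) (hatop : a ≠ ∞) (hb0 : b ≠ 0) (hbtop : b ≠ ∞) (hd0 : d ≠ 0) (hdtop : d ≠ ∞)
    (s : ℝ) :
    Tendsto (fun δ : ℝ => (k * a ^ (-(s * δ)) - (k - 1)) * b ^ (-δ) * d ^ δ) (𝓝 0) (𝓝 1) := by
  have hk1 : (1 : ℝ≥0∞) ≤ k := Nat.one_le_cast.2 (Nat.one_le_iff_ne_zero.2 hk)
  have hA : Tendsto (fun δ : ℝ => k * a ^ (-(s * δ)) - (k - 1)) (𝓝 0) (𝓝 1) := by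
    have hexp : Tendsto (fun δ : ℝ => -(s * δ)) (𝓝 0) (𝓝 0) :=
      (by fun_prop : Continuous fun δ : ℝ => -(s * δ)).tendsto' 0 0 (by simp)
    have h := ENNReal.Tendsto.sub (ENNReal.Tendsto.const_mul
      (ENNReal.tendsto_const_rpow_nhds_zero ha0 hatop hexp) (Or.inr (ENNReal.natCast_ne_top k)))
      (tendsto_const_nhds (x := (k : ℝ≥0∞) - 1)) (Or.inl (by simp))
    rwa [mul_one, ENNReal.sub_sub_cancel (ENNReal.natCast_ne_top k) hk1] at h
  have hB := ENNReal.tendsto_const_rpow_nhds_zero hb0 hbtop (continuous_neg.tendsto' 0 0 neg_zero)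
  have hD := ENNReal.tendsto_const_rpow_nhds_zero hd0 hdtop (tendsto_id (x := 𝓝 (0 : ℝ)))
  simpa using ENNReal.Tendsto.mul (ENNReal.Tendsto.mul hA (Or.inl one_ne_zero) hB
    (Or.inl one_ne_zero)) (Or.inl (by simp)) hD (Or.inl one_ne_zero)

lemma limsup_le_of_eventually_le_of_tendsto {α β : Type*} [CompleteLinearOrder β]
    [TopologicalSpace β] [OrderTopology β] {l : Filter α} [l.NeBot] {f g : α → β} {a : β}
    (hfg : f ≤ᶠ[l] g) (hg : Tendsto g l (𝓝 a)) :
    limsup f l ≤ a :=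
  (limsup_le_limsup hfg).trans hg.limsup_eq.le

namespace CheegerCluster

variable {N : ℕ}

def similarity (c : Euc N) (l : ℝ) (y : Euc N) : Euc N := c + l • y

lemma image_similarity (c : Euc N) (l : ℝ) (s : Set (Euc N)) :
    similarity c l '' s = c +ᵥ l • s := by
  simp only [← Set.image_smul, ← Set.image_vadd, Set.image_image, vadd_eq_add]
  rfl

lemma injective_similarity (c : Euc N) {l : ℝ} (hl : l ≠ 0) : Injective (similarity c l) :=
  fun _ _ h => smul_right_injective _ hl (add_left_cancel h)

lemma measurableSet_image_similarity (c : Euc N) (l : ℝ) {s : Set (Euc N)}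
    (hs : MeasurableSet s) : MeasurableSet (similarity c l '' s) := by
  rw [image_similarity]
  exact (hs.const_smul₀ l).const_vadd c

lemma volume_image_similarity (c : Euc N) {l : ℝ} (hl : 0 < l) (s : Set (Euc N)) :
    volume (similarity c l '' s) = ENNReal.ofReal l ^ (N : ℝ) * volume s := by
  rw [image_similarity, measure_vadd, Measure.addHaar_smul, finrank_euclideanSpace_fin,
    abs_of_nonneg (pow_nonneg hl.le N), ENNReal.ofReal_pow hl.le, ← ENNReal.rpow_natCast]

lemma image_similarity_ball (c : Euc N) {l : ℝ} (hl : 0 < l) (y : Euc N) (r : ℝ) :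
    similarity c l '' ball y r = ball (similarity c l y) (l * r) := by
  rw [image_similarity, _root_.smul_ball hl.ne', Metric.vadd_ball, Real.norm_of_nonneg hl.le]
  rfl

lemma ball_eq_image_similarity (z : Euc N) {r : ℝ} (hr : 0 < r) :
    ball z r = similarity z r '' ball 0 1 := by
  rw [image_similarity_ball z hr]
  simp [similarity]

lemma lipschitzWith_similarity (c : Euc N) {l : ℝ} (hl : 0 ≤ l) :
    LipschitzWith l.toNNReal (similarity c l) := by
  refine LipschitzWith.of_dist_le_mul fun a b => ?_
  rw [dist_eq_norm, dist_eq_norm, Real.coe_toNNReal _ hl]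
  simp [similarity, ← smul_sub, norm_smul, abs_of_nonneg hl]

lemma density_image_similarity (c : Euc N) {l : ℝ} (hl : 0 < l) (S : Set (Euc N)) (y : Euc N)
    (ρ : ℝ) :
    volume (similarity c l '' S ∩ ball (similarity c l y) ρ) /
        volume (ball (similarity c l y) ρ)
      = volume (S ∩ ball y (ρ / l)) / volume (ball y (ρ / l)) := by
  have hball : ball (similarity c l y) ρ = similarity c l '' ball y (ρ / l) := by
    rw [image_similarity_ball c hl, mul_div_cancel₀ _ hl.ne']
  have h0 : ENNReal.ofReal l ^ (N : ℝ) ≠ 0 := by simp [hl]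
  have htop : ENNReal.ofReal l ^ (N : ℝ) ≠ ∞ := by simp
  rw [hball, ← image_inter (injective_similarity c hl.ne'), volume_image_similarity c hl,
    volume_image_similarity c hl, ENNReal.mul_div_mul_left _ _ h0 htop]

lemma essBoundary_image_similarity_subset (c : Euc N) {l : ℝ} (hl : 0 < l) (S : Set (Euc N)) :
    essBoundary N (similarity c l '' S) ⊆ similarity c l '' essBoundary N S := by
  rintro x ⟨hx0, hx1⟩
  set y := l⁻¹ • (x - c)
  have hxy : similarity c l y = x := by
    simp [y, similarity, smul_smul, mul_inv_cancel₀ hl.ne']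
  have hscale : Tendsto (fun ρ : ℝ => ρ / l) (𝓝[>] 0) (𝓝[>] 0) := by
    refine tendsto_nhdsWithin_of_tendsto_nhds_of_eventually_within _ ?_ ?_
    · simpa using (tendsto_id.div_const l).mono_left (nhdsWithin_le_nhds (a := (0 : ℝ)))
    · filter_upwards [self_mem_nhdsWithin] with ρ hρ using div_pos hρ hl
  have transfer : ∀ L : ℝ≥0∞,
      Tendsto (fun ρ : ℝ => volume (S ∩ ball y ρ) / volume (ball y ρ)) (𝓝[>] 0) (𝓝 L) →
      Tendsto (fun ρ : ℝ => volume (similarity c l '' S ∩ ball x ρ) / volume (ball x ρ))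
        (𝓝[>] 0) (𝓝 L) := fun L hL => by
    simpa only [← hxy, density_image_similarity c hl, comp_def] using hL.comp hscale
  exact ⟨y, ⟨fun h => hx0 (transfer 0 h), fun h => hx1 (transfer 1 h)⟩, hxy⟩

lemma perim_image_similarity_le (hN : 1 ≤ N) (c : Euc N) {l : ℝ} (hl : 0 < l)
    (S : Set (Euc N)) :
    perim N (similarity c l '' S) ≤ ENNReal.ofReal l ^ ((N : ℝ) - 1) * perim N S :=
  calc perim N (similarity c l '' S)
      ≤ μH[(N : ℝ) - 1] (similarity c l '' essBoundary N S) :=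
        measure_mono (essBoundary_image_similarity_subset c hl S)
    _ ≤ ENNReal.ofReal l ^ ((N : ℝ) - 1) * perim N S :=
        (lipschitzWith_similarity c hl.le).hausdorffMeasure_image_le
          (sub_nonneg.2 (by exact_mod_cast hN)) _

lemma perim_ball_le (hN : 1 ≤ N) (z : Euc N) {r : ℝ} (hr : 0 < r) :
    perim N (ball z r) ≤ omegaN N * volume (ball z r) ^ (((N : ℝ) - 1) / N) := by
  have hN0 : (N : ℝ) ≠ 0 := by positivity
  have hB0 : volume (ball (0 : Euc N) 1) ≠ 0 := (measure_ball_pos _ _ one_pos).ne'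
  have hBtop : volume (ball (0 : Euc N) 1) ≠ ∞ := measure_ball_lt_top.ne
  have hV0 : volume (ball (0 : Euc N) 1) ^ (((N : ℝ) - 1) / N) ≠ 0 := by
    simp [ENNReal.rpow_eq_zero_iff, hB0, hBtop]
  have hVtop : volume (ball (0 : Euc N) 1) ^ (((N : ℝ) - 1) / N) ≠ ∞ := by
    simp [ENNReal.rpow_eq_top_iff, hB0, hBtop]
  have hr0 : ENNReal.ofReal r ≠ 0 := by simp [hr]
  have hvol : volume (ball z r) ^ (((N : ℝ) - 1) / N) =
      ENNReal.ofReal r ^ ((N : ℝ) - 1) * volume (ball (0 : Euc N) 1) ^ (((N : ℝ) - 1) / N) := by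
    rw [ball_eq_image_similarity z hr, volume_image_similarity z hr,
      ENNReal.mul_rpow_of_ne_zero (by simp [hr0]) (measure_ball_pos _ _ one_pos).ne',
      ← ENNReal.rpow_mul, mul_div_cancel₀ _ hN0]
  calc perim N (ball z r)
      ≤ ENNReal.ofReal r ^ ((N : ℝ) - 1) * perim N (ball (0 : Euc N) 1) := by
        rw [ball_eq_image_similarity z hr]
        exact perim_image_similarity_le hN z hr _
    _ = omegaN N * volume (ball z r) ^ (((N : ℝ) - 1) / N) := by
        rw [hvol, omegaN, mul_left_comm, ENNReal.div_mul_cancel hV0 hVtop, mul_comm]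

/-- No positivity or finiteness of `omegaN N` is needed, since `a / (a * b) ≤ b⁻¹` for every
`a : ℝ≥0∞`. -/
lemma cheegerRatioW_ball_le (hN : 1 ≤ N) (z : Euc N) {r : ℝ} (hr : 0 < r) (δ : ℝ) :
    cheegerRatioW N (((N : ℝ) - 1) / N + δ) (ball z r) ≤ volume (ball z r) ^ (-δ) := by
  have hv0 : volume (ball z r) ≠ 0 := (measure_ball_pos _ _ hr).ne'
  have hvtop : volume (ball z r) ≠ ∞ := measure_ball_lt_top.ne
  rw [cheegerRatioW, if_neg hv0, ENNReal.rpow_add _ _ hv0 hvtop, ← mul_assoc,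
    ENNReal.rpow_neg]
  calc perim N (ball z r) /
        (omegaN N * volume (ball z r) ^ (((N : ℝ) - 1) / N) * volume (ball z r) ^ δ)
      ≤ omegaN N * volume (ball z r) ^ (((N : ℝ) - 1) / N) /
        (omegaN N * volume (ball z r) ^ (((N : ℝ) - 1) / N) * volume (ball z r) ^ δ) :=
        ENNReal.div_le_div_right (perim_ball_le hN z hr) _
    _ ≤ (volume (ball z r) ^ δ)⁻¹ :=
        ENNReal.div_mul_self_le_inv _ (by simp [hv0, hvtop]) (by simp [hv0, hvtop])

lemma cheegerRatioW_image_similarity_le (hN : 1 ≤ N) (c : Euc N) {l : ℝ} (hl : 0 < l) (α : ℝ)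
    (S : Set (Euc N)) :
    cheegerRatioW N α (similarity c l '' S) ≤
      ENNReal.ofReal l ^ ((N : ℝ) - 1 - N * α) * cheegerRatioW N α S := by
  have hl0 : ENNReal.ofReal l ≠ 0 := by simp [hl]
  by_cases hS : volume S = 0
  · simp [cheegerRatioW, hS, hl0]
  have hT : volume (similarity c l '' S) ≠ 0 := by
    simp [volume_image_similarity c hl, hS, hl0]
  rw [cheegerRatioW, if_neg hT, cheegerRatioW, if_neg hS]
  calc perim N (similarity c l '' S) / (omegaN N * volume (similarity c l '' S) ^ α)
      ≤ ENNReal.ofReal l ^ ((N : ℝ) - 1) * perim N S /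
          (ENNReal.ofReal l ^ ((N : ℝ) * α) * (omegaN N * volume S ^ α)) := by
        rw [volume_image_similarity c hl, ENNReal.mul_rpow_of_ne_zero (by simp [hl0]) hS,
          ← ENNReal.rpow_mul, mul_left_comm]
        exact ENNReal.div_le_div_right (perim_image_similarity_le hN c hl S) _
    _ = ENNReal.ofReal l ^ ((N : ℝ) - 1 - N * α) * (perim N S / (omegaN N * volume S ^ α)) := by
        rw [ENNReal.mul_div_mul_comm (Or.inl (by simp [ENNReal.rpow_eq_zero_iff, hl0]))
            (Or.inl (by simp [ENNReal.rpow_eq_top_iff, hl0])),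
          ← ENNReal.rpow_sub _ _ hl0 ENNReal.ofReal_ne_top]

lemma cheegerRatioW_add_mul_rpow (θ δ : ℝ) {S : Set (Euc N)} (h0 : volume S ≠ 0)
    (htop : volume S ≠ ∞) :
    cheegerRatioW N (θ + δ) S * volume S ^ δ = perim N S / (omegaN N * volume S ^ θ) := by
  rw [cheegerRatioW, if_neg h0, ENNReal.rpow_add _ _ h0 htop, ← mul_assoc,
    ← ENNReal.mul_div_right_comm,
    ENNReal.mul_div_mul_right _ _ (by simp [h0, htop]) (by simp [h0, htop])]

lemma isCluster_image_similarity {k : ℕ} {D S : Set (Euc N)} {x : Fin k → Euc N} {r R : ℝ}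
    (hR : 0 < R) (hr : 0 < r) (hsub : ∀ i, ball (x i) r ⊆ D)
    (hdisj : Pairwise (Disjoint on fun i => ball (x i) r)) (hSR : S ⊆ ball 0 R)
    (hS : MeasurableSet S) :
    IsCluster D fun j => similarity (x j) (r / R) '' S := by
  have hball : ∀ j, similarity (x j) (r / R) '' S ⊆ ball (x j) r := fun j => by
    have := image_mono (f := similarity (x j) (r / R)) hSR
    rwa [image_similarity_ball _ (div_pos hr hR), div_mul_cancel₀ _ hR.ne',
      similarity, smul_zero, add_zero] at this
  exact ⟨fun j => (hball j).trans (hsub j), fun j => measurableSet_image_similarity _ _ hS,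
    fun i j hij => (hdisj hij).mono (hball i) (hball j)⟩

lemma cheegerRatioW_le_of_isMinimal (hN : 1 ≤ N) {k : ℕ} {D : Set (Euc N)} {R : ℝ} (hR : 0 < R)
    (hDR : D ⊆ ball 0 R) {x : Fin k → Euc N} {r : ℝ} (hr : 0 < r) (hsub : ∀ i, ball (x i) r ⊆ D)
    (hdisj : Pairwise (Disjoint on fun i => ball (x i) r)) (δ : ℝ) {Ω : Fin k → Set (Euc N)}
    (hΩ : IsCluster D Ω)
    (hmin : ∀ Ω' : Fin k → Set (Euc N), IsCluster D Ω' →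
      ∑ i, cheegerRatioW N (((N : ℝ) - 1) / N + δ) (Ω i) ≤
        ∑ i, cheegerRatioW N (((N : ℝ) - 1) / N + δ) (Ω' i)) (i : Fin k) :
    cheegerRatioW N (((N : ℝ) - 1) / N + δ) (Ω i) ≤
      (k * ENNReal.ofReal (r / R) ^ (-(N * δ)) - (k - 1)) * volume (ball (0 : Euc N) r) ^ (-δ) := by
  have hN0 : (N : ℝ) ≠ 0 := by positivity
  have hB0 : volume (ball (0 : Euc N) r) ≠ 0 := (measure_ball_pos _ _ hr).ne'
  have hBtop : volume (ball (0 : Euc N) r) ≠ ∞ := measure_ball_lt_top.ne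
  have hexp : (N : ℝ) - 1 - N * (((N : ℝ) - 1) / N + δ) = -(N * δ) := by field_simp; ring
  have hballs : ∑ l, cheegerRatioW N (((N : ℝ) - 1) / N + δ) (ball (x l) r) ≤
      k * volume (ball (0 : Euc N) r) ^ (-δ) := by
    simpa [Measure.addHaar_ball_center] using Finset.sum_le_sum (s := Finset.univ)
      fun l _ => cheegerRatioW_ball_le hN (x l) hr δ
  have hcopies : ∀ j, ∑ l, cheegerRatioW N (((N : ℝ) - 1) / N + δ)
      (similarity (x l) (r / R) '' Ω j) ≤
      k * (ENNReal.ofReal (r / R) ^ (-(N * δ)) * cheegerRatioW N (((N : ℝ) - 1) / N + δ) (Ω j)) :=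
    fun j => by
      simpa [hexp] using Finset.sum_le_sum (s := Finset.univ) fun l _ =>
        cheegerRatioW_image_similarity_le hN (x l) (div_pos hr hR) (((N : ℝ) - 1) / N + δ) (Ω j)
  have h := apply_le_of_sum_le_card_mul (fun j => cheegerRatioW N (((N : ℝ) - 1) / N + δ) (Ω j))
    (b := volume (ball (0 : Euc N) r) ^ (-δ)) (by simp [ENNReal.rpow_eq_top_iff, hB0, hBtop])
    (by
      rw [Fintype.card_fin]
      exact (hmin _ ⟨hsub, fun _ => measurableSet_ball, hdisj⟩).trans hballs)
    (fun j => by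
      rw [Fintype.card_fin]
      exact (hmin _ (isCluster_image_similarity hR hr hsub hdisj ((hΩ.1 j).trans hDR)
        (hΩ.2.1 j))).trans (hcopies j)) i
  rwa [Fintype.card_fin] at h

lemma perim_div_le_of_isMinimal (hN : 1 ≤ N) {k : ℕ} {D : Set (Euc N)} {R : ℝ} (hR : 0 < R)
    (hDR : D ⊆ ball 0 R) {x : Fin k → Euc N} {r : ℝ} (hr : 0 < r) (hsub : ∀ i, ball (x i) r ⊆ D)
    (hdisj : Pairwise (Disjoint on fun i => ball (x i) r)) {δ : ℝ} (hδ : 0 ≤ δ)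
    {Ω : Fin k → Set (Euc N)} (hΩ : IsCluster D Ω)
    (hmin : ∀ Ω' : Fin k → Set (Euc N), IsCluster D Ω' →
      ∑ i, cheegerRatioW N (((N : ℝ) - 1) / N + δ) (Ω i) ≤
        ∑ i, cheegerRatioW N (((N : ℝ) - 1) / N + δ) (Ω' i)) (i : Fin k) :
    perim N (Ω i) / (omegaN N * volume (Ω i) ^ (((N : ℝ) - 1) / N)) ≤
      (k * ENNReal.ofReal (r / R) ^ (-(N * δ)) - (k - 1)) * volume (ball (0 : Euc N) r) ^ (-δ) *
        volume D ^ δ := by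
  have hW := cheegerRatioW_le_of_isMinimal hN hR hDR hr hsub hdisj δ hΩ hmin i
  have hWtop : cheegerRatioW N (((N : ℝ) - 1) / N + δ) (Ω i) ≠ ∞ := by
    refine ne_top_of_le_ne_top (ENNReal.mul_ne_top (ne_top_of_le_ne_top ?_ tsub_le_self) ?_) hW
    · exact ENNReal.mul_ne_top (ENNReal.natCast_ne_top k)
        (by simp [ENNReal.rpow_eq_top_iff, div_pos hr hR])
    · simp [ENNReal.rpow_eq_top_iff, (measure_ball_pos volume (0 : Euc N) hr).ne',
        measure_ball_lt_top.ne]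
  have h0 : volume (Ω i) ≠ 0 := fun h => hWtop (by simp [cheegerRatioW, h])
  have htop : volume (Ω i) ≠ ∞ :=
    ((measure_mono ((hΩ.1 i).trans hDR)).trans_lt measure_ball_lt_top).ne
  rw [← cheegerRatioW_add_mul_rpow _ _ h0 htop]
  gcongr
  exact hΩ.1 i

lemma perim_le_of_perim_div_le {S D : Set (Euc N)} {θ : ℝ} (hθ : 0 ≤ θ) (hω : omegaN N ≠ ∞)
    (hSD : S ⊆ D) (hDtop : volume D ≠ ∞) {a : ℝ≥0∞} (ha : a ≠ ∞)
    (h : perim N S / (omegaN N * volume S ^ θ) ≤ a) :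
    perim N S ≤ a * (omegaN N * volume D ^ θ) :=
  calc perim N S
      ≤ perim N S / (omegaN N * volume S ^ θ) * (omegaN N * volume S ^ θ) :=
        ENNReal.le_div_mul_self (ENNReal.mul_ne_top hω (ENNReal.rpow_ne_top_of_nonneg hθ
          (ne_top_of_le_ne_top hDtop (measure_mono hSD)))) (ne_top_of_le_ne_top ha h)
    _ ≤ a * (omegaN N * volume D ^ θ) := by gcongr

end CheegerCluster

open CheegerCluster in
theorem stmt_10_general (N k : ℕ) (hN : 2 ≤ N)
    (D : Set (Euc N)) (hDbdd : Bornology.IsBounded D)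
    (x : Fin k → Euc N) (rD : ℝ) (hr : 0 < rD)
    (hsub : ∀ i, ball (x i) rD ⊆ D)
    (hdisj : Pairwise (Disjoint on fun i => ball (x i) rD))
    (Ω : ℝ → Fin k → Set (Euc N))
    (hmin : ∀ δ : ℝ, 0 < δ →
      IsCluster D (Ω δ) ∧
      ∀ Ω' : Fin k → Set (Euc N), IsCluster D Ω' →
        (∑ i, cheegerRatioW N (((N : ℝ) - 1) / N + δ) (Ω δ i)) ≤
          (∑ i, cheegerRatioW N (((N : ℝ) - 1) / N + δ) (Ω' i))) :
    ∀ i,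
      Filter.limsup
        (fun δ : ℝ => perim N (Ω δ i) / (omegaN N * (volume (Ω δ i)) ^ (((N : ℝ) - 1) / N)))
        (𝓝[>] 0) ≤ 1 ∧
      Filter.limsup (fun δ : ℝ => perim N (Ω δ i)) (𝓝[>] 0)
        ≤ omegaN N * (volume D) ^ (((N : ℝ) - 1) / N) := by
  intro i
  have hN1 : 1 ≤ N := by omega
  obtain ⟨R, hR, hDR⟩ := hDbdd.subset_ball_lt 0 0
  have hD0 : volume D ≠ 0 :=
    ((measure_ball_pos volume (x i) hr).trans_le (measure_mono (hsub i))).ne'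
  have hDtop : volume D ≠ ∞ := ((measure_mono hDR).trans_lt measure_ball_lt_top).ne
  set g : ℝ → ℝ≥0∞ := fun δ => (k * ENNReal.ofReal (rD / R) ^ (-(N * δ)) - (k - 1)) *
    volume (ball (0 : Euc N) rD) ^ (-δ) * volume D ^ δ
  have hg : Tendsto g (𝓝[>] 0) (𝓝 1) :=
    (tendsto_natCast_mul_rpow_sub_mul_rpow (Fin.pos i).ne' (by simp [hr, hR]) (by simp)
      (measure_ball_pos _ _ hr).ne' measure_ball_lt_top.ne hD0 hDtop _).mono_left
      nhdsWithin_le_nhds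
  have hratio : ∀ δ > 0,
      perim N (Ω δ i) / (omegaN N * volume (Ω δ i) ^ (((N : ℝ) - 1) / N)) ≤ g δ :=
    fun δ hδ => perim_div_le_of_isMinimal hN1 hR hDR hr hsub hdisj hδ.le (hmin δ hδ).1
      (hmin δ hδ).2 i
  refine ⟨limsup_le_of_eventually_le_of_tendsto (eventually_nhdsWithin_of_forall hratio) hg, ?_⟩
  have hθ : 0 ≤ ((N : ℝ) - 1) / N := div_nonneg (by simp; omega) (Nat.cast_nonneg N)
  rcases eq_or_ne (omegaN N) ∞ with hω | hω
  · simp [hω, ENNReal.rpow_eq_zero_iff, hD0, hDtop]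
  refine limsup_le_of_eventually_le_of_tendsto ?_
    (by simpa using ENNReal.Tendsto.mul_const hg (Or.inl one_ne_zero))
  filter_upwards [self_mem_nhdsWithin, hg.eventually_ne ENNReal.one_ne_top] with δ hδ hgδ
  exact perim_le_of_perim_div_le hθ hω ((hmin δ hδ).1.1 i) hDtop hgδ (hratio δ hδ)

/-- with α = (N−1)/N + δ, if for every δ > 0 the cluster (Ω_i^δ)
minimizes Σ_i P(Ω_i)/(ω_N|Ω_i|^α) over 𝒫_k(D), and D contains k pairwise
disjoint balls of radius r_D > 0, then for every i
limsup_{δ→0⁺} P(Ω_i^δ)/(ω_N|Ω_i^δ|^{(N−1)/N}) ≤ 1, and in particular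
limsup_{δ→0⁺} P(Ω_i^δ) ≤ ω_N|D|^{(N−1)/N}. -/
theorem stmt_10 (N k : ℕ) (hN : 2 ≤ N) (hk : 0 < k)
    (D : Set (Euc N)) (hDopen : IsOpen D) (hDbdd : Bornology.IsBounded D)
    (x : Fin k → Euc N) (rD : ℝ) (hr : 0 < rD)
    (hsub : ∀ i, ball (x i) rD ⊆ D)
    (hdisj : Pairwise (Disjoint on fun i => ball (x i) rD))
    (Ω : ℝ → Fin k → Set (Euc N))
    (hmin : ∀ δ : ℝ, 0 < δ →
      IsCluster D (Ω δ) ∧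
      ∀ Ω' : Fin k → Set (Euc N), IsCluster D Ω' →
        (∑ i, cheegerRatioW N (((N : ℝ) - 1) / N + δ) (Ω δ i)) ≤
          (∑ i, cheegerRatioW N (((N : ℝ) - 1) / N + δ) (Ω' i))) :
    ∀ i,
      Filter.limsup
        (fun δ : ℝ => perim N (Ω δ i) / (omegaN N * (volume (Ω δ i)) ^ (((N : ℝ) - 1) / N)))
        (𝓝[>] 0) ≤ 1 ∧
      Filter.limsup (fun δ : ℝ => perim N (Ω δ i)) (𝓝[>] 0)
        ≤ omegaN N * (volume D) ^ (((N : ℝ) - 1) / N) :=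
  stmt_10_general N k hN D hDbdd x rD hr hsub hdisj Ω hmin
end
end

section
/- Let N ≥ 2. There exists a constant S_N > 0, depending only on the dimension N, with the following property: for every bounded open set D ⊆ ℝ^N, every ε > 0, and every Lipschitz function u : ℝ^N → ℝ with compact support contained in D and 0 ≤ u ≤ 1 everywhere, one has S_N · ( ∫_D u^{2N/(N−1)} dx )^{(N−1)/N} ≤ ε ∫_D |∇u|² dx + (9/ε) ∫_D u²(1−u)² dx. (The proof combines the Young inequality 2ab ≤ εa² + b²/ε, the chain rule identity |∇(u²/2 − u³/3)| = |∇u|·u(1−u), the Gagliardo–Nirenberg–Sobolev inequality ‖v‖_{L^{N/(N−1)}} ≤ c_N ∫|∇v| for compactly supported v, and the pointwise bound t²/2 − t³/3 ≥ t²/6 on [0,1].) -/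
open MeasureTheory Metric Set Filter Function
open scoped ENNReal NNReal Topology symmDiff

noncomputable section

/-!
With `Φ(t) = t²/2 - t³/3` one has `|∇(Φ ∘ u)| = u(1 - u)|∇u|` and `u² ≤ 6 Φ(u)` on `[0, 1]`.
The Gagliardo–Nirenberg–Sobolev inequality for `Φ ∘ u`, followed by Young's inequality
`u(1 - u)|∇u| ≤ (ε|∇u|² + ε⁻¹ u²(1 - u)²) / 2`, bounds `‖u²‖_{N/(N-1)}` by a dimensional multiple
of the Modica–Mortola energy. The Sobolev inequality, known for `C¹` functions, extends to
Lipschitz ones by mollification, because `∫ |∇(φ ⋆ v)| ≤ ∫ |∇v|` and Fatou's lemma passes the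
bound to the limit.
-/

open ContinuousLinearMap (lsmul)
open scoped Convolution

theorem ContDiffBump.exists_seq_tendsto_rOut_zero {E : Type*} [NormedAddCommGroup E]
    [NormedSpace ℝ E] [HasContDiffBump E] (c : E) :
    ∃ φ : ℕ → ContDiffBump c, Tendsto (fun n => (φ n).rOut) atTop (𝓝 0) := by
  refine ⟨fun n => ⟨1 / (n + 2), 1 / (n + 1), by positivity, ?_⟩, ?_⟩
  · gcongr; linarith
  · exact tendsto_one_div_add_atTop_nhds_zero_nat

section Mollification

variable {E F : Type*} [NormedAddCommGroup E] [NormedSpace ℝ E] [FiniteDimensional ℝ E]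
  [MeasurableSpace E] [BorelSpace E] {μ : Measure E} [μ.IsAddHaarMeasure]
  [NormedAddCommGroup F] [NormedSpace ℝ F] [FiniteDimensional ℝ F]
  {v : E → F} {K : ℝ≥0}

theorem LipschitzWith.hasFDerivAt_convolution (hv : LipschitzWith K v) (φ : ContDiffBump (0 : E))
    (x₀ : E) :
    HasFDerivAt (φ.normed μ ⋆[lsmul ℝ ℝ, μ] v)
      (∫ t, φ.normed μ t • fderiv ℝ v (x₀ - t) ∂μ) x₀ := by
  have hφ : Continuous (φ.normed μ) := φ.continuous_normed
  have hdiff : ∀ᵐ t ∂μ, DifferentiableAt ℝ v (x₀ - t) :=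
    (quasiMeasurePreserving_sub_left_of_right_invariant μ x₀).ae hv.ae_differentiableAt
  show HasFDerivAt (fun x => ∫ t, φ.normed μ t • v (x - t) ∂μ) _ x₀
  refine (hasFDerivAt_integral_of_dominated_loc_of_lip' (bound := fun t => φ.normed μ t * K)
    univ_mem (fun x _ => ?_) ?_ ?_ ?_ ?_ ?_).2
  · exact (hφ.smul (hv.continuous.comp (continuous_const.sub continuous_id))).aestronglyMeasurable
  · simpa [convolution_lsmul] using
      (φ.hasCompactSupport_normed.convolutionExists_left (lsmul ℝ ℝ) hφ
        hv.continuous.locallyIntegrable (μ := μ) x₀).integrable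
  · exact hφ.aestronglyMeasurable.smul
      ((measurable_fderiv ℝ v).comp (measurable_const.sub measurable_id)).aestronglyMeasurable
  · refine Eventually.of_forall fun t x _ => ?_
    rw [← smul_sub, norm_smul, Real.norm_of_nonneg (φ.nonneg_normed t), mul_assoc]
    gcongr
    · exact φ.nonneg_normed t
    · simpa using hv.norm_sub_le (x - t) (x₀ - t)
  · exact φ.integrable_normed.mul_const _
  · filter_upwards [hdiff] with t ht
    exact ((ht.hasFDerivAt.comp x₀ ((hasFDerivAt_id x₀).sub_const t)).const_smul _).congr_fderiv
      (by ext; simp)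

theorem LipschitzWith.lintegral_enorm_fderiv_convolution_le (hv : LipschitzWith K v)
    (φ : ContDiffBump (0 : E)) :
    ∫⁻ x, ‖fderiv ℝ (φ.normed μ ⋆[lsmul ℝ ℝ, μ] v) x‖ₑ ∂μ ≤ ∫⁻ x, ‖fderiv ℝ v x‖ₑ ∂μ := by
  have hφ : Measurable fun t => ‖φ.normed μ t‖ₑ := φ.continuous_normed.measurable.enorm
  have hdv : Measurable fun x => ‖fderiv ℝ v x‖ₑ := (measurable_fderiv ℝ v).enorm
  have hmass : ∫⁻ t, ‖φ.normed μ t‖ₑ ∂μ = 1 := by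
    simp_rw [Real.enorm_of_nonneg (φ.nonneg_normed _)]
    rw [← ofReal_integral_eq_lintegral_ofReal φ.integrable_normed
      (Eventually.of_forall φ.nonneg_normed), φ.integral_normed, ENNReal.ofReal_one]
  calc ∫⁻ x, ‖fderiv ℝ (φ.normed μ ⋆[lsmul ℝ ℝ, μ] v) x‖ₑ ∂μ
      ≤ ∫⁻ x, ∫⁻ t, ‖φ.normed μ t‖ₑ * ‖fderiv ℝ v (x - t)‖ₑ ∂μ ∂μ := by
        refine lintegral_mono fun x => ?_
        rw [(hv.hasFDerivAt_convolution φ x).fderiv]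
        simpa only [enorm_smul] using
          enorm_integral_le_lintegral_enorm (fun t => φ.normed μ t • fderiv ℝ v (x - t))
    _ = ∫⁻ t, ‖φ.normed μ t‖ₑ * ∫⁻ x, ‖fderiv ℝ v (x - t)‖ₑ ∂μ ∂μ := by
        rw [lintegral_lintegral_swap (hφ.comp measurable_snd |>.mul
          (hdv.comp (measurable_fst.sub measurable_snd))).aemeasurable]
        exact lintegral_congr fun t => lintegral_const_mul _ (hdv.comp (measurable_id.sub_const t))
    _ = ∫⁻ x, ‖fderiv ℝ v x‖ₑ ∂μ := by
        simp_rw [lintegral_sub_right_eq_self (fun x => ‖fderiv ℝ v x‖ₑ)]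
        rw [lintegral_mul_const _ hφ, hmass, one_mul]

theorem LipschitzWith.lintegral_pow_le_pow_lintegral_fderiv (hv : LipschitzWith K v)
    (hcs : HasCompactSupport v) {p : ℝ} (hp : (Module.finrank ℝ E : ℝ).HolderConjugate p) :
    ∫⁻ x, ‖v x‖ₑ ^ p ∂μ ≤
      lintegralPowLePowLIntegralFDerivConst μ p * (∫⁻ x, ‖fderiv ℝ v x‖ₑ ∂μ) ^ p := by
  obtain ⟨φ, hφ⟩ := ContDiffBump.exists_seq_tendsto_rOut_zero (0 : E)
  set w : ℕ → E → F := fun n => (φ n).normed μ ⋆[lsmul ℝ ℝ, μ] v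
  have hw : ∀ n, ContDiff ℝ 1 (w n) := fun n =>
    (φ n).hasCompactSupport_normed.contDiff_convolution_left _ (φ n).contDiff_normed
      hv.continuous.locallyIntegrable
  have hw_bound : ∀ n, ∫⁻ x, ‖w n x‖ₑ ^ p ∂μ ≤
      lintegralPowLePowLIntegralFDerivConst μ p * (∫⁻ x, ‖fderiv ℝ v x‖ₑ ∂μ) ^ p := fun n =>
    (MeasureTheory.lintegral_pow_le_pow_lintegral_fderiv μ (hw n)
      ((φ n).hasCompactSupport_normed.convolution _ hcs) hp).trans <|
      mul_le_mul_right (ENNReal.rpow_le_rpow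
        (hv.lintegral_enorm_fderiv_convolution_le (φ n)) hp.symm.nonneg) _
  have hw_tendsto : ∀ x, Tendsto (fun n => ‖w n x‖ₑ ^ p) atTop (𝓝 (‖v x‖ₑ ^ p)) := fun x =>
    ((ENNReal.continuous_rpow_const.tendsto _).comp (continuous_enorm.tendsto _)).comp
      (ContDiffBump.convolution_tendsto_right_of_continuous hφ hv.continuous x)
  calc ∫⁻ x, ‖v x‖ₑ ^ p ∂μ = ∫⁻ x, liminf (fun n => ‖w n x‖ₑ ^ p) atTop ∂μ :=
        lintegral_congr fun x => (hw_tendsto x).liminf_eq.symm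
    _ ≤ liminf (fun n => ∫⁻ x, ‖w n x‖ₑ ^ p ∂μ) atTop :=
        lintegral_liminf_le fun n =>
          (ENNReal.continuous_rpow_const.comp (hw n).continuous.enorm).measurable
    _ ≤ _ := liminf_le_of_frequently_le' (Frequently.of_forall hw_bound)

end Mollification

/-- `Φ' = √W` on `[0, 1]` for the double-well potential `W(t) = t²(1 - t)²`
(the Modica–Mortola trick). -/
def wellPrimitive (t : ℝ) : ℝ := t ^ 2 / 2 - t ^ 3 / 3

theorem hasDerivAt_wellPrimitive (t : ℝ) : HasDerivAt wellPrimitive (t * (1 - t)) t :=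
  (((hasDerivAt_pow 2 t).div_const 2).sub ((hasDerivAt_pow 3 t).div_const 3)).congr_deriv
    (by push_cast; ring)

theorem sq_le_six_mul_wellPrimitive {t : ℝ} (ht : t ≤ 1) : t ^ 2 ≤ 6 * wellPrimitive t := by
  unfold wellPrimitive
  nlinarith [mul_nonneg (sq_nonneg t) (sub_nonneg.2 ht)]

theorem lipschitzOnWith_wellPrimitive : LipschitzOnWith 1 wellPrimitive (Icc 0 1) :=
  (convex_Icc 0 1).lipschitzOnWith_of_nnnorm_hasDerivWithin_le
    (fun t _ => (hasDerivAt_wellPrimitive t).hasDerivWithinAt) fun t ht => by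
      rw [← NNReal.coe_le_coe, coe_nnnorm, Real.norm_eq_abs, NNReal.coe_one,
        abs_of_nonneg (mul_nonneg ht.1 (sub_nonneg.2 ht.2))]
      nlinarith [ht.1, ht.2]

theorem LipschitzWith.wellPrimitive_comp {X : Type*} [PseudoEMetricSpace X] {u : X → ℝ}
    {K : ℝ≥0} (hu : LipschitzWith K u) (h0 : ∀ x, 0 ≤ u x) (h1 : ∀ x, u x ≤ 1) :
    LipschitzWith K (wellPrimitive ∘ u) := by
  simpa using lipschitzOnWith_wellPrimitive.comp (lipschitzOnWith_univ.2 hu)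
    fun x _ => ⟨h0 x, h1 x⟩

theorem HasCompactSupport.wellPrimitive_comp {X : Type*} [TopologicalSpace X] {u : X → ℝ}
    (hcs : HasCompactSupport u) : HasCompactSupport (wellPrimitive ∘ u) :=
  hcs.comp_left (by simp [wellPrimitive])

theorem HasCompactSupport.integrable_sq_mul_one_sub_sq {X : Type*} [TopologicalSpace X]
    [MeasurableSpace X] [OpensMeasurableSpace X] {μ : Measure X} [IsFiniteMeasureOnCompacts μ]
    {u : X → ℝ} (hcs : HasCompactSupport u) (hu : Continuous u) :
    Integrable (fun x => u x ^ 2 * (1 - u x) ^ 2) μ :=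
  (by fun_prop : Continuous fun x => u x ^ 2 * (1 - u x) ^ 2).integrable_of_hasCompactSupport
    ((hcs.comp_left (g := (· ^ 2)) (by simp)).mul_right)

theorem ofReal_rpow_two_mul_le_wellPrimitive {t p : ℝ} (h0 : 0 ≤ t) (h1 : t ≤ 1) (hp : 0 ≤ p) :
    ENNReal.ofReal (t ^ (2 * p)) ≤ 6 ^ p * ‖wellPrimitive t‖ₑ ^ p := by
  have h6 : 0 ≤ 6 * wellPrimitive t := (sq_nonneg t).trans (sq_le_six_mul_wellPrimitive h1)
  calc ENNReal.ofReal (t ^ (2 * p)) = ENNReal.ofReal ((t ^ 2) ^ p) := by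
        rw [Real.rpow_mul h0, Real.rpow_two]
    _ ≤ ENNReal.ofReal ((6 * wellPrimitive t) ^ p) :=
        ENNReal.ofReal_le_ofReal <|
          Real.rpow_le_rpow (sq_nonneg t) (sq_le_six_mul_wellPrimitive h1) hp
    _ = 6 ^ p * ‖wellPrimitive t‖ₑ ^ p := by
        rw [← ENNReal.ofReal_rpow_of_nonneg h6 hp, ← Real.enorm_of_nonneg h6, enorm_mul,
          ENNReal.mul_rpow_of_nonneg _ _ hp, Real.enorm_of_nonneg (by norm_num : (0 : ℝ) ≤ 6),
          ENNReal.ofReal_ofNat]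

section ModicaMortola

variable {E : Type*} [NormedAddCommGroup E] [NormedSpace ℝ E] [MeasurableSpace E]
  {u : E → ℝ} {K : ℝ≥0} {p : ℝ}

def modicaMortolaEnergy (μ : Measure E) (ε : ℝ) (u : E → ℝ) : ℝ :=
  ε * ∫ x, ‖fderiv ℝ u x‖ ^ 2 ∂μ + ε⁻¹ * ∫ x, u x ^ 2 * (1 - u x) ^ 2 ∂μ

theorem modicaMortolaEnergy_nonneg {μ : Measure E} {ε : ℝ} (hε : 0 ≤ ε) :
    0 ≤ modicaMortolaEnergy μ ε u :=
  add_nonneg (mul_nonneg hε (integral_nonneg fun _ => by positivity))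
    (mul_nonneg (inv_nonneg.2 hε) (integral_nonneg fun _ => by positivity))

variable [BorelSpace E]

theorem LipschitzWith.integrable_norm_fderiv_sq {μ : Measure E} [IsFiniteMeasureOnCompacts μ]
    (hu : LipschitzWith K u) (hcs : HasCompactSupport u) :
    Integrable (fun x => ‖fderiv ℝ u x‖ ^ 2) μ :=
  memLp_one_iff_integrable.1 <| (hcs.fderiv (𝕜 := ℝ)).norm.comp_left (g := (· ^ 2)) (by simp)
    |>.memLp_of_bound ((measurable_fderiv ℝ u).norm.pow_const 2).aestronglyMeasurable (K ^ 2)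
      (Eventually.of_forall fun x => by
        simpa using pow_le_pow_left₀ (norm_nonneg _) (norm_fderiv_le_of_lipschitz ℝ hu) 2)

variable [FiniteDimensional ℝ E] {μ : Measure E} [μ.IsAddHaarMeasure]

theorem LipschitzWith.ae_norm_fderiv_wellPrimitive_comp (hu : LipschitzWith K u) :
    ∀ᵐ x ∂μ, ‖fderiv ℝ (wellPrimitive ∘ u) x‖ = |u x * (1 - u x)| * ‖fderiv ℝ u x‖ := by
  filter_upwards [hu.ae_differentiableAt] with x hx
  rw [((hasDerivAt_wellPrimitive (u x)).comp_hasFDerivAt x hx.hasFDerivAt).fderiv, norm_smul,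
    Real.norm_eq_abs]

theorem LipschitzWith.lintegral_enorm_fderiv_wellPrimitive_comp_le (hu : LipschitzWith K u)
    (hcs : HasCompactSupport u) {ε : ℝ} (hε : 0 < ε) :
    ∫⁻ x, ‖fderiv ℝ (wellPrimitive ∘ u) x‖ₑ ∂μ ≤
      ENNReal.ofReal (modicaMortolaEnergy μ ε u / 2) := by
  have hgrad := (hu.integrable_norm_fderiv_sq hcs (μ := μ)).const_mul ε
  have hwell := (hcs.integrable_sq_mul_one_sub_sq hu.continuous (μ := μ)).const_mul ε⁻¹
  have hsum : Integrable (fun x => (ε * ‖fderiv ℝ u x‖ ^ 2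
      + ε⁻¹ * (u x ^ 2 * (1 - u x) ^ 2)) / 2) μ := (hgrad.add hwell).div_const 2
  calc ∫⁻ x, ‖fderiv ℝ (wellPrimitive ∘ u) x‖ₑ ∂μ
      = ∫⁻ x, ENNReal.ofReal (|u x * (1 - u x)| * ‖fderiv ℝ u x‖) ∂μ := by
        refine lintegral_congr_ae ?_
        filter_upwards [hu.ae_norm_fderiv_wellPrimitive_comp (μ := μ)] with x hx
        rw [← hx, ofReal_norm]
    _ ≤ ∫⁻ x, ENNReal.ofReal ((ε * ‖fderiv ℝ u x‖ ^ 2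
          + ε⁻¹ * (u x ^ 2 * (1 - u x) ^ 2)) / 2) ∂μ := by
        refine lintegral_mono fun x => ENNReal.ofReal_le_ofReal ?_
        have := two_mul_le_add_mul_sq (a := ‖fderiv ℝ u x‖) (b := |u x * (1 - u x)|) hε
        rw [sq_abs, mul_pow] at this
        linarith
    _ = ENNReal.ofReal (modicaMortolaEnergy μ ε u / 2) := by
        rw [← ofReal_integral_eq_lintegral_ofReal hsum
          (Eventually.of_forall fun x => by positivity), integral_div,
          integral_add hgrad hwell, integral_const_mul, integral_const_mul, modicaMortolaEnergy]

theorem LipschitzWith.lintegral_ofReal_rpow_two_mul_le (hu : LipschitzWith K u)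
    (hcs : HasCompactSupport u) (h0 : ∀ x, 0 ≤ u x) (h1 : ∀ x, u x ≤ 1)
    (hp : (Module.finrank ℝ E : ℝ).HolderConjugate p) :
    ∫⁻ x, ENNReal.ofReal (u x ^ (2 * p)) ∂μ ≤ 6 ^ p * lintegralPowLePowLIntegralFDerivConst μ p *
      (∫⁻ x, ‖fderiv ℝ (wellPrimitive ∘ u) x‖ₑ ∂μ) ^ p := by
  calc ∫⁻ x, ENNReal.ofReal (u x ^ (2 * p)) ∂μ
      ≤ ∫⁻ x, 6 ^ p * ‖(wellPrimitive ∘ u) x‖ₑ ^ p ∂μ := lintegral_mono fun x =>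
        ofReal_rpow_two_mul_le_wellPrimitive (h0 x) (h1 x) hp.symm.nonneg
    _ = 6 ^ p * ∫⁻ x, ‖(wellPrimitive ∘ u) x‖ₑ ^ p ∂μ :=
        lintegral_const_mul' _ _ (by simp)
    _ ≤ _ := by
        rw [mul_assoc]
        exact mul_le_mul_right ((hu.wellPrimitive_comp h0 h1).lintegral_pow_le_pow_lintegral_fderiv
          hcs.wellPrimitive_comp hp) _

theorem LipschitzWith.integral_rpow_rpow_inv_le_modicaMortolaEnergy (hu : LipschitzWith K u)
    (hcs : HasCompactSupport u) (h0 : ∀ x, 0 ≤ u x) (h1 : ∀ x, u x ≤ 1)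
    (hp : (Module.finrank ℝ E : ℝ).HolderConjugate p) {ε : ℝ} (hε : 0 < ε) :
    (∫ x, u x ^ (2 * p) ∂μ) ^ p⁻¹ ≤
      3 * (lintegralPowLePowLIntegralFDerivConst μ p : ℝ) ^ p⁻¹ * modicaMortolaEnergy μ ε u := by
  set C := lintegralPowLePowLIntegralFDerivConst μ p
  set F := modicaMortolaEnergy μ ε u
  have hF : 0 ≤ F := modicaMortolaEnergy_nonneg hε.le
  have hp0 : 0 ≤ p := hp.symm.nonneg
  have hu0 : ∀ x, 0 ≤ u x ^ (2 * p) := fun x => Real.rpow_nonneg (h0 x) _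
  have hE : ∫⁻ x, ENNReal.ofReal (u x ^ (2 * p)) ∂μ ≤ 6 ^ p * C * ENNReal.ofReal (F / 2) ^ p :=
    (hu.lintegral_ofReal_rpow_two_mul_le hcs h0 h1 hp).trans <| mul_le_mul_right
      (ENNReal.rpow_le_rpow (hu.lintegral_enorm_fderiv_wellPrimitive_comp_le hcs hε) hp0) _
  have hI : ∫ x, u x ^ (2 * p) ∂μ ≤ 6 ^ p * C * (F / 2) ^ p := by
    rw [integral_eq_lintegral_of_nonneg_ae (Eventually.of_forall fun x => hu0 x)
      (hu.continuous.rpow_const fun _ => Or.inr (by positivity)).aestronglyMeasurable]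
    refine (ENNReal.toReal_mono (by finiteness) hE).trans_eq ?_
    rw [ENNReal.toReal_mul, ENNReal.toReal_mul, ← ENNReal.toReal_rpow, ← ENNReal.toReal_rpow,
      ENNReal.toReal_ofReal (by positivity)]
    norm_num
  rw [Real.rpow_inv_le_iff_of_pos (integral_nonneg hu0) (by positivity)
    hp.symm.pos]
  refine hI.trans_eq ?_
  rw [Real.mul_rpow (by positivity) hF, Real.mul_rpow (by positivity) (by positivity),
    Real.rpow_inv_rpow C.coe_nonneg hp.symm.pos.ne', Real.div_rpow hF zero_le_two,
    show (6 : ℝ) = 2 * 3 by norm_num, Real.mul_rpow zero_le_two (by norm_num)]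
  field_simp

theorem exists_pos_mul_integral_rpow_rpow_inv_le
    (hp : (Module.finrank ℝ E : ℝ).HolderConjugate p) :
    ∃ S : ℝ, 0 < S ∧ ∀ ε : ℝ, 0 < ε → ∀ (u : E → ℝ) (K : ℝ≥0), LipschitzWith K u →
      HasCompactSupport u → (∀ x, 0 ≤ u x) → (∀ x, u x ≤ 1) →
      S * (∫ x, u x ^ (2 * p) ∂μ) ^ p⁻¹ ≤
        ε * ∫ x, ‖fderiv ℝ u x‖ ^ 2 ∂μ + 9 / ε * ∫ x, u x ^ 2 * (1 - u x) ^ 2 ∂μ := by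
  set c := (lintegralPowLePowLIntegralFDerivConst μ p : ℝ) ^ p⁻¹
  refine ⟨(3 * c + 1)⁻¹, by positivity, fun ε hε u K hu hcs h0 h1 => ?_⟩
  calc (3 * c + 1)⁻¹ * (∫ x, u x ^ (2 * p) ∂μ) ^ p⁻¹
      ≤ (3 * c + 1)⁻¹ * (3 * c * modicaMortolaEnergy μ ε u) := by
        gcongr
        exact hu.integral_rpow_rpow_inv_le_modicaMortolaEnergy hcs h0 h1 hp hε
    _ ≤ modicaMortolaEnergy μ ε u := by
        rw [← mul_assoc]
        exact mul_le_of_le_one_left (modicaMortolaEnergy_nonneg hε.le)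
          (inv_mul_le_one_of_le₀ (by linarith) (by positivity))
    _ ≤ _ := by
        unfold modicaMortolaEnergy
        gcongr
        rw [inv_eq_one_div]
        gcongr
        norm_num

end ModicaMortola

/-- the quantitative Sobolev-type lower bound used in the
Γ-liminf part of the Modica–Mortola approximation: there is a dimensional
constant S_N > 0 such that for every bounded open D, every ε > 0 and every
Lipschitz, compactly supported u : ℝ^N → [0,1] with support in D,
S_N (∫_D u^{2N/(N−1)})^{(N−1)/N} ≤ ε∫_D |∇u|² + (9/ε)∫_D u²(1−u)². -/
theorem stmt_15 (N : ℕ) (hN : 2 ≤ N) :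
    ∃ S : ℝ, 0 < S ∧
      ∀ (D : Set (Euc N)), IsOpen D → Bornology.IsBounded D →
      ∀ ε : ℝ, 0 < ε →
      ∀ u : Euc N → ℝ, (∃ K : ℝ≥0, LipschitzWith K u) →
        HasCompactSupport u → tsupport u ⊆ D →
        (∀ y, 0 ≤ u y) → (∀ y, u y ≤ 1) →
        S * (∫ y in D, u y ^ ((2 * (N : ℝ)) / ((N : ℝ) - 1)))
              ^ (((N : ℝ) - 1) / (N : ℝ))
          ≤ ε * (∫ y in D, ‖fderiv ℝ u y‖ ^ 2)
            + (9 / ε) * ∫ y in D, (u y) ^ 2 * (1 - u y) ^ 2 := by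
  have hN1 : (1 : ℝ) < N := by exact_mod_cast hN
  set p : ℝ := N / (N - 1)
  have hp : (Module.finrank ℝ (Euc N) : ℝ).HolderConjugate p := by
    rw [finrank_euclideanSpace_fin]
    exact .conjExponent hN1
  obtain ⟨S, hS, hbound⟩ := exists_pos_mul_integral_rpow_rpow_inv_le (μ := volume) hp
  refine ⟨S, hS, fun D _ _ ε hε u ⟨K, hu⟩ hcs hD h0 h1 => ?_⟩
  have hu_out : ∀ x ∉ D, u x = 0 := fun x hx =>
    image_eq_zero_of_notMem_tsupport fun h => hx (hD h)
  have hdu_out : ∀ x ∉ D, fderiv ℝ u x = 0 := fun x hx =>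
    image_eq_zero_of_notMem_tsupport fun h => hx (hD (tsupport_fderiv_subset ℝ h))
  rw [show 2 * (N : ℝ) / (N - 1) = 2 * p by ring,
    show ((N : ℝ) - 1) / N = p⁻¹ from (inv_div _ _).symm,
    setIntegral_eq_integral_of_forall_compl_eq_zero (f := fun y => u y ^ (2 * p))
      fun x hx => by simp [hu_out x hx, hp.symm.pos.ne'],
    setIntegral_eq_integral_of_forall_compl_eq_zero (f := fun y => ‖fderiv ℝ u y‖ ^ 2)
      fun x hx => by simp [hdu_out x hx],
    setIntegral_eq_integral_of_forall_compl_eq_zero (f := fun y => u y ^ 2 * (1 - u y) ^ 2)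
      fun x hx => by simp [hu_out x hx]]
  exact hbound ε hε u K hu hcs h0 h1
end
end

section
/- Let N ≥ 2, k ≥ 1, and let D ⊆ ℝ^N be a nonempty bounded open set. Consider configurations of k pairwise disjoint open balls B(x_1,r_1),…,B(x_k,r_k) contained in D with all r_i > 0. Then the supremum over all such configurations of min_{i=1,…,k} r_i is finite and strictly positive, and it is attained: there exist centers x_1,…,x_k and radii r_1,…,r_k > 0 with B(x_i,r_i) ⊆ D pairwise disjoint such that min_i r_i is maximal. -/
open MeasureTheory Metric Set Filter Function
open scoped ENNReal NNReal Topology symmDiff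

noncomputable section

/-! Since shrinking balls keeps them inside `D` and disjoint, only the common radius
`ρ = minᵢ rᵢ` matters. For bounded `D` the packings with `ρ` above a fixed positive
level form a closed bounded set of (centres, radius), so in finite dimension the radius
attains its maximum on it. -/

def IsBallPacking {α ι : Type*} [PseudoMetricSpace α] (D : Set α) (x : ι → α) (ρ : ℝ) :
    Prop :=
  (∀ i, ball (x i) ρ ⊆ D) ∧ Pairwise (Disjoint on fun i => ball (x i) ρ)

section MetricSpace

variable {α ι : Type*} [PseudoMetricSpace α] {D : Set α}

theorem IsBallPacking.mono {D' : Set α} {x : ι → α} {ρ : ℝ} (h : IsBallPacking D x ρ)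
    (hD : D ⊆ D') : IsBallPacking D' x ρ :=
  ⟨fun i => (h.1 i).trans hD, h.2⟩

theorem isBallPacking_iInf [Finite ι] {x : ι → α} {r : ι → ℝ}
    (hsub : ∀ i, ball (x i) (r i) ⊆ D) (hdisj : Pairwise (Disjoint on fun i => ball (x i) (r i))) :
    IsBallPacking D x (⨅ i, r i) :=
  have hshrink i : ball (x i) (⨅ j, r j) ⊆ ball (x i) (r i) :=
    ball_subset_ball (ciInf_le (Finite.bddBelow_range r) i)
  ⟨fun i => (hshrink i).trans (hsub i), fun _ _ hij => (hdisj hij).mono (hshrink _) (hshrink _)⟩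

theorem isClosed_setOf_ball_subset (D : Set α) : IsClosed {p : α × ℝ | ball p.1 p.2 ⊆ D} := by
  have : {p : α × ℝ | ball p.1 p.2 ⊆ D} = ⋂ y ∈ Dᶜ, {p | p.2 ≤ dist y p.1} := by
    ext p
    simp only [subset_def, mem_ball, mem_ofPred_eq, mem_iInter, mem_compl_iff]
    exact forall_congr' fun y => by rw [← not_lt]; tauto
  rw [this]
  exact isClosed_biInter fun y _ => isClosed_le continuous_snd (continuous_const.dist continuous_fst)

theorem isClosed_setOf_disjoint_ball_ball :
    IsClosed {p : α × α × ℝ | Disjoint (ball p.1 p.2.2) (ball p.2.1 p.2.2)} := by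
  have : {p : α × α × ℝ | Disjoint (ball p.1 p.2.2) (ball p.2.1 p.2.2)} =
      ⋂ z, {p | p.2.2 ≤ dist z p.1} ∪ {p | p.2.2 ≤ dist z p.2.1} := by
    ext p
    simp only [disjoint_left, mem_ball, mem_ofPred_eq, mem_iInter, mem_union, not_lt.symm]
    exact forall_congr' fun z => by tauto
  rw [this]
  exact isClosed_iInter fun z =>
    (isClosed_le (by fun_prop) (by fun_prop)).union (isClosed_le (by fun_prop) (by fun_prop))

theorem isClosed_setOf_isBallPacking (D : Set α) :
    IsClosed {p : (ι → α) × ℝ | IsBallPacking D p.1 p.2} := by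
  simp only [IsBallPacking, Pairwise, ofPred_and, ofPred_forall]
  refine (isClosed_iInter fun i => ?_).inter
    (isClosed_iInter fun i => isClosed_iInter fun j => isClosed_iInter fun _ => ?_)
  · exact (isClosed_setOf_ball_subset D).preimage (by fun_prop : Continuous fun p : (ι → α) × ℝ =>
      (p.1 i, p.2))
  · exact isClosed_setOf_disjoint_ball_ball.preimage
      (by fun_prop : Continuous fun p : (ι → α) × ℝ => (p.1 i, p.1 j, p.2))

end MetricSpace

section NormedSpace

variable {E : Type*} [NormedAddCommGroup E] [NormedSpace ℝ E] [Nontrivial E]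

theorem two_mul_le_diam_of_ball_subset {D : Set E} (hD : Bornology.IsBounded D) {x : E}
    {ρ : ℝ} (hρ : 0 ≤ ρ) (h : ball x ρ ⊆ D) : 2 * ρ ≤ diam D :=
  diam_ball_eq x hρ ▸ diam_mono h hD

/-- `k` balls of radius `ε / (2 (k + 1))` centred on a segment from `p`. -/
theorem exists_isBallPacking_ball (p : E) {ε : ℝ} (hε : 0 < ε) (k : ℕ) :
    ∃ x : Fin k → E, ∃ ρ > 0, IsBallPacking (ball p ε) x ρ := by
  obtain ⟨v, hv⟩ := exists_norm_eq E (by positivity : 0 ≤ ε / (k + 1))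
  have hvpos : 0 < ‖v‖ := by rw [hv]; positivity
  refine ⟨fun i => p + (i : ℝ) • v, ‖v‖ / 2, by positivity, fun i => ?_, fun i j hij => ?_⟩
  · refine ball_subset_ball' ?_
    have hi : (i : ℝ) + 1 ≤ k := by exact_mod_cast i.isLt
    rw [dist_self_add_left, norm_smul, Real.norm_natCast]
    have : ε = (k + 1) * ‖v‖ := by rw [hv]; field_simp
    nlinarith
  · refine ball_disjoint_ball ?_
    have hdiff_int : (1 : ℤ) ≤ |(i : ℤ) - j| := Int.one_le_abs (sub_ne_zero.mpr (by omega))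
    have hdiff : (1 : ℝ) ≤ |(i : ℝ) - j| := by exact_mod_cast hdiff_int
    rw [dist_add_left, dist_eq_norm, ← sub_smul, norm_smul, Real.norm_eq_abs]
    nlinarith

theorem IsOpen.exists_isBallPacking {D : Set E} (hD : IsOpen D) (hne : D.Nonempty) (k : ℕ) :
    ∃ x : Fin k → E, ∃ ρ > 0, IsBallPacking D x ρ := by
  obtain ⟨p, hp⟩ := hne
  obtain ⟨ε, hε, hball⟩ := Metric.isOpen_iff.mp hD p hp
  obtain ⟨x, ρ, hρ, h⟩ := exists_isBallPacking_ball p hε k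
  exact ⟨x, ρ, hρ, h.mono hball⟩

theorem IsBallPacking.exists_max_radius [ProperSpace E] {ι : Type*} [Finite ι]
    [Nonempty ι] {D : Set E} (hD : Bornology.IsBounded D) {x₀ : ι → E} {ρ₀ : ℝ}
    (hρ₀ : 0 < ρ₀) (h₀ : IsBallPacking D x₀ ρ₀) :
    ∃ (x : ι → E) (m : ℝ), ρ₀ ≤ m ∧ IsBallPacking D x m ∧
      ∀ (y : ι → E) ρ, IsBallPacking D y ρ → ρ ≤ m := by
  set K := {p : (ι → E) × ℝ | IsBallPacking D p.1 p.2} ∩ {p | ρ₀ ≤ p.2}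
  have hKsub : K ⊆ univ.pi (fun _ => closure D) ×ˢ Icc ρ₀ (diam D / 2) := by
    rintro ⟨y, ρ⟩ ⟨hy, hρ⟩
    have hρpos : 0 < ρ := hρ₀.trans_le hρ
    refine ⟨fun i _ => subset_closure (hy.1 i (mem_ball_self hρpos)), hρ, ?_⟩
    have := two_mul_le_diam_of_ball_subset hD hρpos.le (hy.1 (Classical.arbitrary ι))
    change ρ ≤ diam D / 2
    linarith
  have hK : IsCompact K :=
    ((isCompact_univ_pi fun _ => hD.isCompact_closure).prod isCompact_Icc).of_isClosed_subset
      ((isClosed_setOf_isBallPacking D).inter (isClosed_le continuous_const continuous_snd))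
      hKsub
  obtain ⟨⟨x, m⟩, ⟨hx, hm⟩, hmax⟩ :=
    hK.exists_isMaxOn ⟨(x₀, ρ₀), h₀, le_refl ρ₀⟩ continuous_snd.continuousOn
  refine ⟨x, m, hm, hx, fun y ρ hy => ?_⟩
  rcases le_or_gt ρ₀ ρ with hρ | hρ
  · exact hmax (show (y, ρ) ∈ K from ⟨hy, hρ⟩)
  · exact hρ.le.trans hm

end NormedSpace

/-- the classical optimal packing problem.  For a nonempty
bounded open D ⊆ ℝ^N, the supremum over configurations of k pairwise disjoint
open balls of positive radius contained in D of the smallest radius is finite,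
strictly positive and attained. -/
theorem stmt_17 (N k : ℕ) (hN : 2 ≤ N) (hk : 0 < k)
    (D : Set (Euc N)) (hDopen : IsOpen D) (hDbdd : Bornology.IsBounded D)
    (hDne : D.Nonempty) :
    ∃ m : ℝ, 0 < m ∧
      IsGreatest {ρ : ℝ | ∃ (x : Fin k → Euc N) (r : Fin k → ℝ),
        (∀ i, 0 < r i) ∧ (∀ i, ball (x i) (r i) ⊆ D) ∧
        Pairwise (Disjoint on fun i => ball (x i) (r i)) ∧
        ρ = ⨅ i, r i} m := by
  have : NeZero N := ⟨by omega⟩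
  have : Nonempty (Fin k) := ⟨⟨0, hk⟩⟩
  obtain ⟨x₀, ρ₀, hρ₀, h₀⟩ := hDopen.exists_isBallPacking hDne k
  obtain ⟨x, m, hm, hx, hmax⟩ := IsBallPacking.exists_max_radius hDbdd hρ₀ h₀
  have hmpos : 0 < m := hρ₀.trans_le hm
  refine ⟨m, hmpos, ⟨x, fun _ => m, fun _ => hmpos, hx.1, hx.2, ciInf_const.symm⟩, ?_⟩
  rintro ρ ⟨y, r, -, hsub, hdisj, rfl⟩
  exact hmax y _ (isBallPacking_iInf hsub hdisj)
end
end

section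
/- Let N ≥ 2, k ≥ 1, and let D ⊆ ℝ^N be a nonempty bounded open set. Consider configurations of k pairwise disjoint open balls B(x_1,r_1),…,B(x_k,r_k) contained in D with all r_i > 0. Then the supremum over all such configurations of the product r_1·r_2·…·r_k is finite and strictly positive, and it is attained: there exist centers x_1,…,x_k and radii r_1,…,r_k > 0 with B(x_i,r_i) ⊆ D pairwise disjoint such that ∏_{i=1}^k r_i is maximal. -/
open MeasureTheory Metric Set Filter Function
open scoped ENNReal NNReal Topology symmDiff

noncomputable section

lemma aux_radius_le {N : ℕ} (hN : 0 < N) {x : Euc N} {r R : ℝ} (hr : 0 < r)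
    (h : ball x r ⊆ closedBall (0 : Euc N) R) : r ≤ 2 * R := by
  by_contra hlt
  push_neg at hlt
  have hx : ‖x‖ ≤ R := by
    simpa [mem_closedBall, dist_zero_right] using h (mem_ball_self hr)
  have hR0 : 0 ≤ R := le_trans (norm_nonneg x) hx
  set e : Euc N := EuclideanSpace.single (⟨0, hN⟩ : Fin N) (1 : ℝ) with he_def
  have he : ‖e‖ = 1 := by simp [he_def]
  set t : ℝ := (2 * R + r) / 2 with ht_def
  have ht0 : 0 < t := by rw [ht_def]; positivity
  have htr : t < r := by rw [ht_def]; linarith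
  have ht2R : 2 * R < t := by rw [ht_def]; linarith
  have hmem : x + t • e ∈ ball x r := by
    rw [mem_ball, dist_eq_norm, add_sub_cancel_left, norm_smul, he]
    rw [Real.norm_eq_abs, abs_of_pos ht0]; simpa using htr
  have h2 : ‖x + t • e‖ ≤ R := by
    simpa [mem_closedBall, dist_zero_right] using h hmem
  have : t ≤ 2 * R := by
    have h3 : ‖t • e‖ ≤ ‖x + t • e‖ + ‖x‖ := by
      calc ‖t • e‖ = ‖(x + t • e) - x‖ := by rw [add_sub_cancel_left]
        _ ≤ ‖x + t • e‖ + ‖x‖ := norm_sub_le _ _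
    rw [norm_smul, he, Real.norm_eq_abs, abs_of_pos ht0, mul_one] at h3
    linarith
  linarith

lemma aux_fin_cast {k : ℕ} {i j : Fin k} (h : i ≠ j) :
    (1 : ℝ) ≤ |(i.val : ℝ) - (j.val : ℝ)| := by
  have hne : i.val ≠ j.val := fun hc => h (Fin.ext hc)
  rcases hne.lt_or_gt with hlt | hlt
  · have h1 : (i.val : ℝ) + 1 ≤ (j.val : ℝ) := by exact_mod_cast hlt
    rw [abs_sub_comm, abs_of_nonneg (by linarith)]; linarith
  · have h1 : (j.val : ℝ) + 1 ≤ (i.val : ℝ) := by exact_mod_cast hlt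
    rw [abs_of_nonneg (by linarith)]; linarith


/-- the product packing problem.  For a nonempty bounded open
D ⊆ ℝ^N, the supremum over configurations of k pairwise disjoint open balls of
positive radius contained in D of the product of the radii is finite, strictly
positive and attained. -/
theorem stmt_18 (N k : ℕ) (hN : 2 ≤ N) (hk : 0 < k)
    (D : Set (Euc N)) (hDopen : IsOpen D) (hDbdd : Bornology.IsBounded D)
    (hDne : D.Nonempty) :
    ∃ m : ℝ, 0 < m ∧
      IsGreatest {ρ : ℝ | ∃ (x : Fin k → Euc N) (r : Fin k → ℝ),
        (∀ i, 0 < r i) ∧ (∀ i, ball (x i) (r i) ⊆ D) ∧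
        Pairwise (Disjoint on fun i => ball (x i) (r i)) ∧
        ρ = ∏ i, r i} m := by
  classical
  have hN0 : 0 < N := by omega
  obtain ⟨R, hDR⟩ := hDbdd.subset_closedBall 0
  -- the configuration space
  set P := (Fin k → Euc N) × (Fin k → ℝ) with hP
  set K : Set P := {p | (∀ i, p.1 i ∈ closure D) ∧ (∀ i, p.2 i ∈ Icc 0 (2*R)) ∧
    (∀ i, ball (p.1 i) (p.2 i) ⊆ D) ∧
    (∀ i j, i ≠ j → p.2 i + p.2 j ≤ dist (p.1 i) (p.1 j))} with hK
  set f : P → ℝ := fun p => ∏ i, p.2 i with hf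
  have hfc : Continuous f := by
    exact continuous_finset_prod _ fun i _ => (continuous_apply i).comp continuous_snd
  -- K is closed
  have hKclosed : IsClosed K := by
    have h1 : IsClosed {p : P | ∀ i, p.1 i ∈ closure D} := by
      rw [setOf_forall]
      exact isClosed_iInter fun i =>
        isClosed_closure.preimage ((continuous_apply i).comp continuous_fst)
    have h2 : IsClosed {p : P | ∀ i, p.2 i ∈ Icc 0 (2*R)} := by
      rw [setOf_forall]
      exact isClosed_iInter fun i =>
        isClosed_Icc.preimage ((continuous_apply i).comp continuous_snd)
    have h3 : IsClosed {p : P | ∀ i, ball (p.1 i) (p.2 i) ⊆ D} := by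
      have heq : {p : P | ∀ i, ball (p.1 i) (p.2 i) ⊆ D} =
          ⋂ i, ⋂ y ∈ Dᶜ, {p : P | p.2 i ≤ dist y (p.1 i)} := by
        ext p
        simp only [mem_setOf_eq, mem_iInter, mem_compl_iff]
        constructor
        · intro hsub i y hy
          by_contra hlt
          push_neg at hlt
          exact hy (hsub i (by rwa [mem_ball]))
        · intro hle i z hz
          by_contra hzD
          exact absurd (hle i z hzD) (not_le.mpr (mem_ball.mp hz))
      rw [heq]
      exact isClosed_iInter fun i => isClosed_biInter fun y _ =>
        isClosed_le ((continuous_apply i).comp continuous_snd)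
          (continuous_const.dist ((continuous_apply i).comp continuous_fst))
    have h4 : IsClosed {p : P | ∀ i j, i ≠ j → p.2 i + p.2 j ≤ dist (p.1 i) (p.1 j)} := by
      rw [setOf_forall]
      refine isClosed_iInter fun i => ?_
      rw [setOf_forall]
      refine isClosed_iInter fun j => ?_
      by_cases hij : i = j
      · simp [hij]
      · have : {p : P | i ≠ j → p.2 i + p.2 j ≤ dist (p.1 i) (p.1 j)} =
            {p : P | p.2 i + p.2 j ≤ dist (p.1 i) (p.1 j)} := by
          ext p; simp [hij]
        rw [this]
        exact isClosed_le
          (((continuous_apply i).comp continuous_snd).add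
            ((continuous_apply j).comp continuous_snd))
          (((continuous_apply i).comp continuous_fst).dist
            ((continuous_apply j).comp continuous_fst))
    have : K = _ ∩ (_ ∩ (_ ∩ _)) := rfl
    exact this ▸ h1.inter (h2.inter (h3.inter h4))
  -- K is compact
  have hKcomp : IsCompact K := by
    refine IsCompact.of_isClosed_subset
      (s := (Set.univ.pi fun _ : Fin k => closure D) ×ˢ
        (Set.univ.pi fun _ : Fin k => Icc (0:ℝ) (2*R)))
      ((isCompact_univ_pi fun _ : Fin k => hDbdd.isCompact_closure).prod
        (isCompact_univ_pi fun _ : Fin k => isCompact_Icc (a := (0:ℝ)) (b := 2*R)))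
      hKclosed ?_
    intro p hp
    exact ⟨fun i _ => hp.1 i, fun i _ => hp.2.1 i⟩
  -- an explicit configuration with positive product
  obtain ⟨x0, hx0⟩ := hDne
  obtain ⟨ε, hε, hballD⟩ := Metric.isOpen_iff.mp hDopen x0 hx0
  set δ : ℝ := ε / (4 * k) with hδdef
  have hδ : 0 < δ := by
    apply div_pos hε; positivity
  have hδε : δ * (4 * k) = ε := by
    rw [hδdef]; field_simp
  set e : Euc N := EuclideanSpace.single (⟨0, hN0⟩ : Fin N) (1 : ℝ) with he_def
  have he : ‖e‖ = 1 := by simp [he_def]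
  set c : Fin k → Euc N := fun i => x0 + ((3 * δ * i.val : ℝ)) • e with hc
  have hdist : ∀ i j : Fin k, dist (c i) (c j) = 3 * δ * |(i.val : ℝ) - j.val| := by
    intro i j
    rw [dist_eq_norm, hc]
    have heq : (x0 + ((3 * δ * i.val : ℝ)) • e) - (x0 + ((3 * δ * j.val : ℝ)) • e)
        = ((3 * δ * i.val - 3 * δ * j.val : ℝ)) • e := by
      rw [sub_smul]; abel
    rw [heq, norm_smul, he, mul_one, Real.norm_eq_abs, ← mul_sub, abs_mul]
    rw [abs_of_pos (by linarith : (0:ℝ) < 3 * δ)]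
  have hival : ∀ i : Fin k, (i.val : ℝ) ≤ (k : ℝ) - 1 := by
    intro i
    have : (i.val : ℝ) + 1 ≤ (k : ℝ) := by exact_mod_cast i.isLt
    linarith
  have hsub0 : ∀ i : Fin k, ball (c i) δ ⊆ D := by
    intro i
    refine subset_trans (ball_subset_ball' ?_) hballD
    have : dist (c i) x0 = 3 * δ * i.val := by
      rw [hc, dist_eq_norm, add_sub_cancel_left, norm_smul, he, mul_one,
        Real.norm_eq_abs, abs_of_nonneg (by positivity)]
    rw [this]
    have h1 := hival i
    have hk1 : (1 : ℝ) ≤ (k : ℝ) := by exact_mod_cast hk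
    nlinarith [hδ.le]
  set p0 : P := (c, fun _ => δ) with hp0
  have hp0K : p0 ∈ K := by
    refine ⟨fun i => subset_closure (hsub0 i (mem_ball_self hδ)), fun i =>
      ⟨hδ.le, aux_radius_le hN0 hδ (fun y hy => hDR (hsub0 i hy))⟩, hsub0, ?_⟩
    intro i j hij
    rw [hdist i j]
    have := aux_fin_cast hij
    show δ + δ ≤ _
    nlinarith [hδ.le]
  -- maximize
  obtain ⟨p, hpK, hpmax⟩ := hKcomp.exists_isMaxOn ⟨p0, hp0K⟩ hfc.continuousOn
  have hfp0 : 0 < f p0 := by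
    rw [hf]
    exact Finset.prod_pos fun i _ => hδ
  have hm0 : 0 < f p := lt_of_lt_of_le hfp0 (hpmax hp0K)
  have hrpos : ∀ i, 0 < p.2 i := by
    intro i
    rcases ((hpK.2.1 i).1).lt_or_eq with h | h
    · exact h
    · exfalso
      have : f p = 0 := Finset.prod_eq_zero (Finset.mem_univ i) h.symm
      rw [this] at hm0; exact lt_irrefl _ hm0
  refine ⟨f p, hm0, ⟨p.1, p.2, hrpos, hpK.2.2.1, ?_, rfl⟩, ?_⟩
  · intro i j hij
    exact ball_disjoint_ball (hpK.2.2.2 i j hij)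
  · rintro ρ ⟨x, r, hr, hsubD, hdisj, rfl⟩
    have hxK : (x, r) ∈ K := by
      refine ⟨fun i => subset_closure (hsubD i (mem_ball_self (hr i))),
        fun i => ⟨(hr i).le,
          aux_radius_le hN0 (hr i) (fun y hy => hDR (hsubD i hy))⟩,
        hsubD, fun i j hij => ?_⟩
      exact (disjoint_ball_ball_iff (hr i) (hr j)).mp (hdisj hij)
    exact hpmax hxK
end
end
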